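/- Let Γ ⊆ Σ be compact with σ(Γ) ⊆ Γ and let μ be a Borel probability measure on Γ. If {E_i : i ∈ Γ_*} is a Moran construction on a complete metric space satisfying (M3) and the uniform finite clustering property, then for μ-almost every i ∈ Γ, the lower local dimension of the pushforward measure πμ at π(i) equals liminf_{n→∞} log μ([i|n]) / log diam(E_{i|n}). -/

import Mathlib

open Metric Filter Set MeasureTheory

/-- The left shift on `Σ = {1,…,κ}^ℕ`. -/
def shiftMap {κ : ℕ} (x : ℕ → Fin κ) : ℕ → Fin κ := fun n => x (n + 1)

/-- The prefix of length `n` of an infinite word. -/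
def pre {κ : ℕ} (x : ℕ → Fin κ) (n : ℕ) : List (Fin κ) := List.ofFn (fun k : Fin n => x k)

/-- `w` belongs to `Γ_*`, the set of finite prefixes of elements of `Γ`. -/
def isPrefixWord {κ : ℕ} (Γ : Set (ℕ → Fin κ)) (w : List (Fin κ)) : Prop :=
  ∃ x ∈ Γ, pre x w.length = w

/-- The cylinder set `[w]` of a finite word `w`. -/
def cylSet {κ : ℕ} (w : List (Fin κ)) : Set (ℕ → Fin κ) := {x | pre x w.length = w}

/-- `Γ(r) = {i ∈ Γ_* : diam(E_i) ≤ r < diam(E_{i⁻})}`. -/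
def GammaR {X : Type*} [MetricSpace X] {κ : ℕ} (Γ : Set (ℕ → Fin κ))
    (E : List (Fin κ) → Set X) (r : ℝ) : Set (List (Fin κ)) :=
  {w | isPrefixWord Γ w ∧ w ≠ [] ∧ diam (E w) ≤ r ∧ r < diam (E w.dropLast)}

/-- `Γ(x,r) = {i ∈ Γ(r) : E_i ∩ B(x,r) ≠ ∅}`. -/
def GammaXR {X : Type*} [MetricSpace X] {κ : ℕ} (Γ : Set (ℕ → Fin κ))
    (E : List (Fin κ) → Set X) (x : X) (r : ℝ) : Set (List (Fin κ)) :=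
  {w ∈ GammaR Γ E r | (E w ∩ ball x r).Nonempty}

section Basics
open Metric Filter Set MeasureTheory
variable {κ : ℕ}

@[simp] lemma pre_length (x : ℕ → Fin κ) (n : ℕ) : (pre x n).length = n := by
  simp [pre]

lemma pre_getElem (x : ℕ → Fin κ) (n k : ℕ) (hk : k < n) :
    (pre x n)[k]'(by simpa using hk) = x k := by
  simp [pre]

lemma pre_eq_iff {x : ℕ → Fin κ} {w : List (Fin κ)} :
    pre x w.length = w ↔ ∀ k, (hk : k < w.length) → x k = w[k] := by
  constructor
  · intro h k hk
    rw [← pre_getElem x w.length k hk]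
    simp [h]
  · intro h
    apply List.ext_getElem (by simp)
    intro k h1 h2
    rw [pre_getElem x w.length k (by simpa using h1)]
    exact h k h2

lemma mem_cylSet_iff {x : ℕ → Fin κ} {w : List (Fin κ)} :
    x ∈ cylSet w ↔ ∀ k, (hk : k < w.length) → x k = w[k] := pre_eq_iff

lemma mem_cylSet_pre (x : ℕ → Fin κ) (n : ℕ) : x ∈ cylSet (pre x n) := by
  rw [cylSet, mem_setOf_eq, pre_length]

lemma pre_eq_of_mem_cylSet {x y : ℕ → Fin κ} {n : ℕ} (h : y ∈ cylSet (pre x n)) :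
    pre y n = pre x n := by
  rw [cylSet, mem_setOf_eq, pre_length] at h; exact h

lemma measurableSet_cylSet (w : List (Fin κ)) : MeasurableSet (cylSet w) := by
  have : cylSet w = ⋂ k ∈ Finset.range w.length, {x : ℕ → Fin κ | ∀ hk : k < w.length, x k = w[k]} := by
    ext x
    simp only [mem_cylSet_iff, mem_iInter, Finset.mem_range, mem_setOf_eq]
    tauto
  rw [this]
  refine MeasurableSet.biInter (Finset.range w.length).countable_toSet (fun k _ => ?_)
  by_cases hk : k < w.length
  · have : {x : ℕ → Fin κ | ∀ hk : k < w.length, x k = w[k]} = (fun x : ℕ → Fin κ => x k) ⁻¹' {w[k]} := by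
      ext x; simp [hk]
    rw [this]
    exact measurable_pi_apply k (MeasurableSet.singleton _)
  · have : {x : ℕ → Fin κ | ∀ hk : k < w.length, x k = w[k]} = univ := by
      ext x; simp [hk]
    simp [this]

lemma isOpen_cylSet (w : List (Fin κ)) : IsOpen (cylSet w) := by
  have : cylSet w = ⋂ k ∈ Finset.range w.length, {x : ℕ → Fin κ | ∀ hk : k < w.length, x k = w[k]} := by
    ext x
    simp only [mem_cylSet_iff, mem_iInter, Finset.mem_range, mem_setOf_eq]
    tauto
  rw [this]
  refine isOpen_biInter_finset (fun k _ => ?_)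
  by_cases hk : k < w.length
  · have : {x : ℕ → Fin κ | ∀ hk : k < w.length, x k = w[k]} = (fun x : ℕ → Fin κ => x k) ⁻¹' {w[k]} := by
      ext x; simp [hk]
    rw [this]
    exact (continuous_apply k).isOpen_preimage _ (isOpen_discrete _)
  · have : {x : ℕ → Fin κ | ∀ hk : k < w.length, x k = w[k]} = univ := by
      ext x; simp [hk]
    simp [this]

lemma pre_take (x : ℕ → Fin κ) {m n : ℕ} (h : m ≤ n) :
    (pre x n).take m = pre x m := by
  apply List.ext_getElem (by simp [h])
  intro k h1 h2
  simp only [List.getElem_take]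
  rw [pre_getElem, pre_getElem]
  · simpa using h2
  · simp at h1; omega

lemma pre_dropLast (x : ℕ → Fin κ) (n : ℕ) :
    (pre x n).dropLast = pre x (n - 1) := by
  rw [List.dropLast_eq_take, pre_length, pre_take x (Nat.sub_le n 1)]

lemma shiftIter_apply (x : ℕ → Fin κ) (m k : ℕ) : (shiftMap^[m] x) k = x (k + m) := by
  induction m generalizing x k with
  | zero => simp
  | succ m ih =>
    rw [Function.iterate_succ_apply, ih]
    simp [shiftMap]; ring_nf

lemma pre_drop (x : ℕ → Fin κ) (m n : ℕ) :
    (pre x n).drop m = pre (shiftMap^[m] x) (n - m) := by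
  apply List.ext_getElem (by simp)
  intro k h1 h2
  simp only [List.getElem_drop]
  rw [pre_getElem, pre_getElem, shiftIter_apply]
  · ring_nf
  · simpa using h2
  · simp at h1; omega

lemma pre_append (x : ℕ → Fin κ) {m n : ℕ} (h : m ≤ n) :
    pre x m ++ (pre x n).drop m = pre x n := by
  rw [← pre_take x h]; exact List.take_append_drop m (pre x n)

end Basics
set_option linter.unusedSectionVars false
section Words
open Metric Filter Set MeasureTheory
variable {X : Type*} [MetricSpace X] {κ : ℕ} {Γ : Set (ℕ → Fin κ)} {E : List (Fin κ) → Set X}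

@[simp] lemma pre_zero (x : ℕ → Fin κ) : pre x 0 = [] := by simp [pre]

lemma pre_ne_nil {x : ℕ → Fin κ} {n : ℕ} (hn : 0 < n) : pre x n ≠ [] := by
  intro h
  have := congrArg List.length h
  simp at this; omega

lemma prefixWord_pre {x : ℕ → Fin κ} (hx : x ∈ Γ) (n : ℕ) : isPrefixWord Γ (pre x n) :=
  ⟨x, hx, by rw [pre_length]⟩

lemma prefixWord_take {w : List (Fin κ)} (h : isPrefixWord Γ w) (m : ℕ) :
    isPrefixWord Γ (w.take m) := by
  obtain ⟨x, hx, hw⟩ := h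
  by_cases hm : m ≤ w.length
  · refine ⟨x, hx, ?_⟩
    have h1 : (w.take m).length = m := by simp [hm]
    have h2 : w.take m = pre x m := by
      conv_lhs => rw [← hw]
      exact pre_take x hm
    rw [h1]
    exact h2.symm
  · rw [List.take_of_length_le (le_of_not_ge hm)]
    exact ⟨x, hx, hw⟩

lemma prefixWord_dropLast {w : List (Fin κ)} (h : isPrefixWord Γ w) :
    isPrefixWord Γ w.dropLast := by
  rw [List.dropLast_eq_take]; exact prefixWord_take h _

lemma shiftIter_mem (hΓs : shiftMap '' Γ ⊆ Γ) {x : ℕ → Fin κ} (hx : x ∈ Γ) (m : ℕ) :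
    shiftMap^[m] x ∈ Γ := by
  induction m with
  | zero => simpa using hx
  | succ m ih => rw [Function.iterate_succ_apply']; exact hΓs ⟨_, ih, rfl⟩

/-- `E` is antitone along prefixes of prefix words. -/
lemma E_subset_take (hM1 : ∀ w, isPrefixWord Γ w → w ≠ [] → E w ⊆ E w.dropLast)
    {w : List (Fin κ)} (h : isPrefixWord Γ w) (m : ℕ) : E w ⊆ E (w.take m) := by
  by_cases hm : w.length ≤ m
  · rw [List.take_of_length_le hm]
  · push_neg at hm
    have hne : w ≠ [] := by
      intro h0; rw [h0] at hm; simp at hm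
    have h1 : E w ⊆ E w.dropLast := hM1 w h hne
    have h2 : w.dropLast.take m = w.take m := by
      rw [List.dropLast_eq_take, List.take_take]
      congr 1; omega
    have h3 : E w.dropLast ⊆ E (w.dropLast.take m) :=
      E_subset_take hM1 (prefixWord_dropLast h) m
    rw [h2] at h3
    exact h1.trans h3
termination_by w.length
decreasing_by
  simp only [List.length_dropLast]
  omega

lemma E_subset_pre (hM1 : ∀ w, isPrefixWord Γ w → w ≠ [] → E w ⊆ E w.dropLast)
    {x : ℕ → Fin κ} (hx : x ∈ Γ) {m n : ℕ} (hmn : m ≤ n) :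
    E (pre x n) ⊆ E (pre x m) := by
  have := E_subset_take hM1 (prefixWord_pre hx n) m
  rwa [pre_take x hmn] at this

lemma diam_E_mono (hM1 : ∀ w, isPrefixWord Γ w → w ≠ [] → E w ⊆ E w.dropLast)
    (hbdd : ∀ w, isPrefixWord Γ w → Bornology.IsBounded (E w))
    {w : List (Fin κ)} (h : isPrefixWord Γ w) (m : ℕ) :
    diam (E w) ≤ diam (E (w.take m)) :=
  diam_mono (E_subset_take hM1 h m) (hbdd _ (prefixWord_take h m))

lemma diam_E_mono_pre (hM1 : ∀ w, isPrefixWord Γ w → w ≠ [] → E w ⊆ E w.dropLast)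
    (hbdd : ∀ w, isPrefixWord Γ w → Bornology.IsBounded (E w))
    {x : ℕ → Fin κ} (hx : x ∈ Γ) {m n : ℕ} (hmn : m ≤ n) :
    diam (E (pre x n)) ≤ diam (E (pre x m)) :=
  diam_mono (E_subset_pre hM1 hx hmn) (hbdd _ (prefixWord_pre hx m))

/-- Uniform smallness of diameters, by compactness of `Γ`. -/
lemma uniform_small (hΓc : IsCompact Γ)
    (hM1 : ∀ w, isPrefixWord Γ w → w ≠ [] → E w ⊆ E w.dropLast)
    (hbdd : ∀ w, isPrefixWord Γ w → Bornology.IsBounded (E w))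
    (hM2 : ∀ x ∈ Γ, Tendsto (fun n => diam (E (pre x n))) atTop (nhds 0))
    {c : ℝ} (hc : 0 < c) :
    ∃ N : ℕ, ∀ x ∈ Γ, ∀ n, N ≤ n → diam (E (pre x n)) ≤ c := by
  have hex : ∀ x : ℕ → Fin κ, ∃ n : ℕ, x ∈ Γ → diam (E (pre x n)) < c := by
    intro x
    by_cases hx : x ∈ Γ
    · obtain ⟨n, hn⟩ := ((hM2 x hx).eventually (gt_mem_nhds hc)).exists
      exact ⟨n, fun _ => hn⟩
    · exact ⟨0, fun h => absurd h hx⟩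
  choose n hn using hex
  have hcover : Γ ⊆ ⋃ x ∈ Γ, cylSet (pre x (n x)) := fun x hx =>
    mem_biUnion hx (mem_cylSet_pre x (n x))
  obtain ⟨t, htΓ, htfin, htcov⟩ := hΓc.elim_finite_subcover_image
    (fun x _ => isOpen_cylSet (pre x (n x))) hcover
  refine ⟨htfin.toFinset.sup n, ?_⟩
  intro y hy m hm
  obtain ⟨x, hxt, hyx⟩ : ∃ x ∈ t, y ∈ cylSet (pre x (n x)) := by
    simpa using htcov hy
  have h1 : pre y (n x) = pre x (n x) := pre_eq_of_mem_cylSet hyx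
  have h2 : n x ≤ m := le_trans (Finset.le_sup (htfin.mem_toFinset.mpr hxt)) hm
  calc diam (E (pre y m)) ≤ diam (E (pre y (n x))) := diam_E_mono_pre hM1 hbdd hy h2
    _ = diam (E (pre x (n x))) := by rw [h1]
    _ ≤ c := le_of_lt (hn x (htΓ hxt))

/-- `Γ(r)` is a finite set of words. -/
lemma gammaR_finite (hΓc : IsCompact Γ)
    (hM1 : ∀ w, isPrefixWord Γ w → w ≠ [] → E w ⊆ E w.dropLast)
    (hbdd : ∀ w, isPrefixWord Γ w → Bornology.IsBounded (E w))
    (hM2 : ∀ x ∈ Γ, Tendsto (fun n => diam (E (pre x n))) atTop (nhds 0))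
    {r : ℝ} (hr : 0 < r) : (GammaR Γ E r).Finite := by
  obtain ⟨N, hN⟩ := uniform_small hΓc hM1 hbdd hM2 hr
  refine (List.finite_length_le (Fin κ) (N + 1)).subset ?_
  rintro w ⟨hw, hne, hdiam, hdrop⟩
  simp only [mem_setOf_eq]
  by_contra hlen
  push_neg at hlen
  obtain ⟨x, hx, hxw⟩ := hw
  have h1 : w.dropLast = pre x (w.length - 1) := by
    conv_lhs => rw [← hxw]
    rw [pre_dropLast]
  have h2 : N ≤ w.length - 1 := by omega
  have := hN x hx (w.length - 1) h2
  rw [← h1] at this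
  linarith

/-- Distinct elements of `Γ(r)` have disjoint cylinders. -/
lemma gammaR_pairwise_disjoint
    (hM1 : ∀ w, isPrefixWord Γ w → w ≠ [] → E w ⊆ E w.dropLast)
    (hbdd : ∀ w, isPrefixWord Γ w → Bornology.IsBounded (E w))
    {r : ℝ} {v w : List (Fin κ)} (hv : v ∈ GammaR Γ E r) (hw : w ∈ GammaR Γ E r)
    (hvw : v ≠ w) : Disjoint (cylSet v) (cylSet w) := by
  rw [Set.disjoint_left]
  intro x hxv hxw
  rw [cylSet, mem_setOf_eq] at hxv hxw
  -- wlog on lengths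
  rcases lt_trichotomy v.length w.length with hlt | heq | hgt
  · -- v is a proper prefix of w
    obtain ⟨hwpw, -, -, hwdrop⟩ := hw
    obtain ⟨-, -, hvdiam, -⟩ := hv
    have hpre : w.dropLast.take v.length = v := by
      conv_lhs => rw [← hxw]
      rw [pre_dropLast, pre_take x (by omega : v.length ≤ w.length - 1)]
      exact hxv
    have := diam_E_mono hM1 hbdd (prefixWord_dropLast hwpw) v.length
    rw [hpre] at this
    linarith
  · apply hvw
    rw [← hxv, ← hxw, heq]
  · obtain ⟨hvpw, -, -, hvdrop⟩ := hv
    obtain ⟨-, -, hwdiam, -⟩ := hw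
    have hpre : v.dropLast.take w.length = w := by
      conv_lhs => rw [← hxv]
      rw [pre_dropLast, pre_take x (by omega : w.length ≤ v.length - 1)]
      exact hxw
    have := diam_E_mono hM1 hbdd (prefixWord_dropLast hvpw) w.length
    rw [hpre] at this
    linarith

/-- Scale selection: the prefix of `x` at scale `r`. -/
lemma exists_scale (hM2 : ∀ x ∈ Γ, Tendsto (fun n => diam (E (pre x n))) atTop (nhds 0))
    {x : ℕ → Fin κ} (hx : x ∈ Γ) {r : ℝ} (hr : 0 < r)
    (hrs : r < diam (E ([] : List (Fin κ)))) :
    ∃ n : ℕ, 0 < n ∧ diam (E (pre x n)) ≤ r ∧ r < diam (E (pre x (n - 1))) ∧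
      pre x n ∈ GammaR Γ E r := by
  classical
  have hex : ∃ n, diam (E (pre x n)) ≤ r := by
    obtain ⟨n, hn⟩ := ((hM2 x hx).eventually (gt_mem_nhds hr)).exists
    exact ⟨n, le_of_lt hn⟩
  refine ⟨Nat.find hex, ?_, Nat.find_spec hex, ?_, ?_⟩
  · rcases Nat.eq_zero_or_pos (Nat.find hex) with h0 | h0
    · exfalso
      have := Nat.find_spec hex
      rw [h0, pre_zero] at this
      linarith
    · exact h0
  · have h0 : 0 < Nat.find hex := by
      rcases Nat.eq_zero_or_pos (Nat.find hex) with h0 | h0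
      · exfalso
        have := Nat.find_spec hex
        rw [h0, pre_zero] at this
        linarith
      · exact h0
    have := Nat.find_min hex (m := Nat.find hex - 1) (by omega)
    linarith [lt_of_not_ge this]
  · have h0 : 0 < Nat.find hex := by
      rcases Nat.eq_zero_or_pos (Nat.find hex) with h0 | h0
      · exfalso
        have := Nat.find_spec hex
        rw [h0, pre_zero] at this
        linarith
      · exact h0
    refine ⟨prefixWord_pre hx _, pre_ne_nil h0, Nat.find_spec hex, ?_⟩
    rw [pre_dropLast]
    have := Nat.find_min hex (m := Nat.find hex - 1) (by omega)
    linarith [lt_of_not_ge this]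

end Words
section Cover
open Metric Filter Set MeasureTheory
variable {X : Type*} [MetricSpace X] [MeasurableSpace X] [BorelSpace X]
  {κ : ℕ} {Γ : Set (ℕ → Fin κ)} {E : List (Fin κ) → Set X} {π : (ℕ → Fin κ) → X}

lemma prefixWord_drop (hΓs : shiftMap '' Γ ⊆ Γ) {w : List (Fin κ)}
    (h : isPrefixWord Γ w) (j : ℕ) : isPrefixWord Γ (w.drop j) := by
  obtain ⟨x, hx, hw⟩ := h
  have h1 : w.drop j = pre (shiftMap^[j] x) (w.length - j) := by
    conv_lhs => rw [← hw]
    rw [pre_drop]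
  rw [h1]
  exact prefixWord_pre (shiftIter_mem hΓs hx j) _

lemma cover_ball (hM2 : ∀ x ∈ Γ, Tendsto (fun n => diam (E (pre x n))) atTop (nhds 0))
    (hπ : ∀ x ∈ Γ, ∀ n : ℕ, π x ∈ E (pre x n))
    {z : X} {r : ℝ} (hr : 0 < r) (hrs : r < diam (E ([] : List (Fin κ)))) :
    π ⁻¹' (ball z r) ∩ Γ ⊆ ⋃ w ∈ GammaXR Γ E z r, cylSet w := by
  rintro y ⟨hyb, hyΓ⟩
  obtain ⟨n, hn0, hle, hlt, hmem⟩ := exists_scale hM2 hyΓ hr hrs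
  exact mem_biUnion ⟨hmem, ⟨π y, hπ y hyΓ n, hyb⟩⟩ (mem_cylSet_pre y n)

lemma measure_ball_le_sum (hπmeas : Measurable π)
    (hM2 : ∀ x ∈ Γ, Tendsto (fun n => diam (E (pre x n))) atTop (nhds 0))
    (hπ : ∀ x ∈ Γ, ∀ n : ℕ, π x ∈ E (pre x n))
    {μ : Measure (ℕ → Fin κ)} (hμΓc : μ Γᶜ = 0)
    {z : X} {r : ℝ} (hr : 0 < r) (hrs : r < diam (E ([] : List (Fin κ))))
    (hfin : (GammaXR Γ E z r).Finite) :
    μ.map π (ball z r) ≤ ∑ w ∈ hfin.toFinset, μ (cylSet w) := by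
  rw [Measure.map_apply hπmeas measurableSet_ball]
  calc μ (π ⁻¹' ball z r)
      ≤ μ ((π ⁻¹' ball z r ∩ Γ) ∪ Γᶜ) := by
        apply measure_mono
        intro y hy
        by_cases hyΓ : y ∈ Γ
        · exact Or.inl ⟨hy, hyΓ⟩
        · exact Or.inr hyΓ
    _ ≤ μ (π ⁻¹' ball z r ∩ Γ) + μ Γᶜ := measure_union_le _ _
    _ = μ (π ⁻¹' ball z r ∩ Γ) := by rw [hμΓc, add_zero]
    _ ≤ μ (⋃ w ∈ hfin.toFinset, cylSet w) := by
        apply measure_mono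
        refine (cover_ball hM2 hπ hr hrs).trans ?_
        intro y hy
        simp only [mem_iUnion, exists_prop] at hy ⊢
        obtain ⟨w, hw, hyw⟩ := hy
        exact ⟨w, hfin.mem_toFinset.mpr hw, hyw⟩
    _ ≤ ∑ w ∈ hfin.toFinset, μ (cylSet w) := measure_biUnion_finset_le _ _

lemma sum_gammaR_le_one
    (hM1 : ∀ w, isPrefixWord Γ w → w ≠ [] → E w ⊆ E w.dropLast)
    (hbdd : ∀ w, isPrefixWord Γ w → Bornology.IsBounded (E w))
    {μ : Measure (ℕ → Fin κ)} [IsProbabilityMeasure μ]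
    {r : ℝ} {S : Finset (List (Fin κ))} (hS : ↑S ⊆ GammaR Γ E r) :
    ∑ w ∈ S, μ (cylSet w) ≤ 1 := by
  have hdisj : (↑S : Set (List (Fin κ))).Pairwise (Function.onFun Disjoint fun w => cylSet w) := by
    intro v hv w hw hvw
    exact gammaR_pairwise_disjoint hM1 hbdd (hS hv) (hS hw) hvw
  rw [← measure_biUnion_finset hdisj (fun w _ => measurableSet_cylSet w)]
  exact prob_le_one

end Cover
section Counting
open Metric Filter Set MeasureTheory
variable {X : Type*} [MetricSpace X] {κ : ℕ} {Γ : Set (ℕ → Fin κ)}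
  {E : List (Fin κ) → Set X} {π : (ℕ → Fin κ) → X}

lemma counting_lemma (hΓc : IsCompact Γ) (hΓs : shiftMap '' Γ ⊆ Γ)
    (hbdd : ∀ w, isPrefixWord Γ w → Bornology.IsBounded (E w))
    (hM1 : ∀ w, isPrefixWord Γ w → w ≠ [] → E w ⊆ E w.dropLast)
    (hM2 : ∀ x ∈ Γ, Tendsto (fun n => diam (E (pre x n))) atTop (nhds 0))
    {D : ℝ} (hD : 1 ≤ D)
    (hM3 : ∀ v w : List (Fin κ), isPrefixWord Γ (v ++ w) →
      diam (E (v ++ w)) ≤ D * diam (E v) * diam (E w))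
    (hπ : ∀ x ∈ Γ, ∀ n : ℕ, π x ∈ E (pre x n))
    {M : ℕ}
    (hM : ∀ z ∈ π '' Γ, ∀ r : ℝ, 0 < r →
      (GammaXR Γ E z r).Finite ∧ (GammaXR Γ E z r).ncard ≤ M) :
    ∃ C : ℕ, ∀ r : ℝ, 0 < r → 2*r < diam (E ([] : List (Fin κ))) →
      ∀ w ∈ GammaR Γ E r,
      {v ∈ GammaR Γ E r | ∃ p ∈ E v, ∃ q ∈ E w, dist p q < r}.ncard ≤ C := by
  classical
  have hDpos : (0:ℝ) < D := lt_of_lt_of_le one_pos hD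
  have hc : (0:ℝ) < 1/(2*D) := by positivity
  obtain ⟨N₀, hN₀⟩ := uniform_small hΓc hM1 hbdd hM2 hc
  set F2 := (List.finite_length_le (Fin κ) N₀).toFinset with hF2
  refine ⟨M * F2.card, ?_⟩
  intro r hr hr2 w hw
  obtain ⟨y, hy, hyw⟩ := hw.1
  set z := π y with hz
  have hzmem : z ∈ π '' Γ := ⟨y, hy, rfl⟩
  have hzE : z ∈ E w := by
    have := hπ y hy w.length
    rwa [hyw] at this
  have h2r : (0:ℝ) < 2*r := by linarith
  obtain ⟨hfin, hcard⟩ := hM z hzmem (2*r) h2r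
  set F1 := hfin.toFinset with hF1
  have key : {v ∈ GammaR Γ E r | ∃ p ∈ E v, ∃ q ∈ E w, dist p q < r} ⊆
      ↑(F1.biUnion (fun u => F2.image (fun s => u ++ s))) := by
    rintro v ⟨hv, p, hp, q, hq, hpq⟩
    have hPlen : diam (E (v.take v.length)) ≤ 2*r := by
      rw [List.take_of_length_le le_rfl]; linarith [hv.2.2.1]
    have hexj : ∃ j, diam (E (v.take j)) ≤ 2*r := ⟨v.length, hPlen⟩
    set j := Nat.find hexj with hjdef
    have hjspec : diam (E (v.take j)) ≤ 2*r := Nat.find_spec hexj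
    have hjle : j ≤ v.length := Nat.find_le hPlen
    have hj0 : 0 < j := by
      rcases Nat.eq_zero_or_pos j with h0 | h0
      · exfalso
        have := hjspec
        rw [h0, List.take_zero] at this
        linarith
      · exact h0
    have hjmin : 2*r < diam (E (v.take (j-1))) := by
      have := Nat.find_min hexj (m := j-1) (by omega)
      linarith [lt_of_not_ge this]
    set u := v.take j with hu
    have hvsplit : u ++ v.drop j = v := List.take_append_drop j v
    have hulen : u.length = j := by
      rw [hu, List.length_take]; omega
    have hupw : isPrefixWord Γ u := prefixWord_take hv.1 j
    have hudrop : u.dropLast = v.take (j-1) := by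
      rw [List.dropLast_eq_take, hulen, hu, List.take_take]
      congr 1; omega
    have hune : u ≠ [] := by
      intro h0
      have := congrArg List.length h0
      rw [hulen] at this
      simp at this; omega
    have huG : u ∈ GammaR Γ E (2*r) := ⟨hupw, hune, hjspec, by rw [hudrop]; exact hjmin⟩
    have hqz : dist q z ≤ r := le_trans (dist_le_diam_of_mem (hbdd w hw.1) hq hzE) hw.2.2.1
    have hpz : dist p z < 2*r := by
      calc dist p z ≤ dist p q + dist q z := dist_triangle p q z
        _ < r + r := by apply add_lt_add_of_lt_of_le hpq hqz
        _ = 2*r := by ring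
    have hpu : p ∈ E u := E_subset_take hM1 hv.1 j hp
    have huX : u ∈ GammaXR Γ E z (2*r) := ⟨huG, ⟨p, hpu, mem_ball.mpr hpz⟩⟩
    have hslen : (v.drop j).length ≤ N₀ := by
      rcases eq_or_lt_of_le hjle with hje | hjlt
      · rw [List.drop_of_length_le (le_of_eq hje.symm)]
        simp
      · have hsne : v.drop j ≠ [] := by
          intro h0
          have := congrArg List.length h0
          simp at this; omega
        have hdl : v.dropLast = u ++ (v.drop j).dropLast := by
          conv_lhs => rw [← hvsplit]
          rw [List.dropLast_append_of_ne_nil hsne]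
        have h3 := hM3 u (v.drop j).dropLast (by rw [← hdl]; exact prefixWord_dropLast hv.1)
        have hvd : r < diam (E v.dropLast) := hv.2.2.2
        rw [hdl] at hvd
        have hd1 : (0:ℝ) ≤ diam (E ((v.drop j).dropLast)) := diam_nonneg
        have h5 : 1/(2*D) < diam (E ((v.drop j).dropLast)) := by
          rw [div_lt_iff₀ (by positivity)]
          have hstep : D * diam (E u) * diam (E ((List.drop j v).dropLast)) ≤
              D * (2*r) * diam (E ((List.drop j v).dropLast)) := by
            apply mul_le_mul_of_nonneg_right _ hd1
            exact mul_le_mul_of_nonneg_left hjspec (le_of_lt hDpos)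
          have h6 : r < D * (2*r) * diam (E ((List.drop j v).dropLast)) :=
            lt_of_lt_of_le (lt_of_lt_of_le hvd h3) hstep
          nlinarith [h6]
        have hspw : isPrefixWord Γ ((v.drop j).dropLast) :=
          prefixWord_dropLast (prefixWord_drop hΓs hv.1 j)
        obtain ⟨x', hx', hx'e⟩ := hspw
        by_contra hlen
        push_neg at hlen
        have hNle : N₀ ≤ ((v.drop j).dropLast).length := by
          rw [List.length_dropLast]; omega
        have := hN₀ x' hx' _ hNle
        rw [hx'e] at this
        linarith
    refine Finset.mem_coe.mpr (Finset.mem_biUnion.mpr ?_)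
    refine ⟨u, hfin.mem_toFinset.mpr huX, Finset.mem_image.mpr ?_⟩
    exact ⟨v.drop j, (List.finite_length_le (Fin κ) N₀).mem_toFinset.mpr hslen, hvsplit⟩
  calc {v ∈ GammaR Γ E r | ∃ p ∈ E v, ∃ q ∈ E w, dist p q < r}.ncard
      ≤ (↑(F1.biUnion (fun u => F2.image (fun s => u ++ s))) : Set (List (Fin κ))).ncard :=
        Set.ncard_le_ncard key (Finset.finite_toSet _)
    _ = (F1.biUnion (fun u => F2.image (fun s => u ++ s))).card := Set.ncard_coe_finset _
    _ ≤ ∑ u ∈ F1, (F2.image (fun s => u ++ s)).card := Finset.card_biUnion_le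
    _ ≤ F1.card * F2.card := by
        refine le_trans (Finset.sum_le_card_nsmul F1 _ F2.card (fun u _ => Finset.card_image_le)) ?_
        simp [smul_eq_mul]
    _ ≤ M * F2.card := by
        have : F1.card = (GammaXR Γ E z (2*r)).ncard := (Set.ncard_eq_toFinset_card _ hfin).symm
        rw [this] at *
        exact Nat.mul_le_mul_right _ hcard

end Counting
section Bad
open Metric Filter Set MeasureTheory
variable {X : Type*} [MetricSpace X] [MeasurableSpace X] [BorelSpace X]
  {κ : ℕ} {Γ : Set (ℕ → Fin κ)} {E : List (Fin κ) → Set X} {π : (ℕ → Fin κ) → X}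

/-- The set of points which are "bad" at scale `r` with exponent `ε`. -/
def badSet (Γ : Set (ℕ → Fin κ)) (E : List (Fin κ) → Set X) (π : (ℕ → Fin κ) → X)
    (μ : Measure (ℕ → Fin κ)) (M' : ℕ) (r ε : ℝ) : Set (ℕ → Fin κ) :=
  {x ∈ Γ | ∃ n : ℕ, pre x n ∈ GammaR Γ E r ∧
    (M' : ENNReal) * ENNReal.ofReal (r ^ (-ε)) * μ (cylSet (pre x n)) <
      μ.map π (ball (π x) r)}

lemma bad_measure_le (hΓc : IsCompact Γ) (hΓs : shiftMap '' Γ ⊆ Γ)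
    (hbdd : ∀ w, isPrefixWord Γ w → Bornology.IsBounded (E w))
    (hM1 : ∀ w, isPrefixWord Γ w → w ≠ [] → E w ⊆ E w.dropLast)
    (hM2 : ∀ x ∈ Γ, Tendsto (fun n => diam (E (pre x n))) atTop (nhds 0))
    {D : ℝ} (hD : 1 ≤ D)
    (hM3 : ∀ v w : List (Fin κ), isPrefixWord Γ (v ++ w) →
      diam (E (v ++ w)) ≤ D * diam (E v) * diam (E w))
    (hπmeas : Measurable π)
    (hπ : ∀ x ∈ Γ, ∀ n : ℕ, π x ∈ E (pre x n))
    {M : ℕ}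
    (hM : ∀ z ∈ π '' Γ, ∀ r : ℝ, 0 < r →
      (GammaXR Γ E z r).Finite ∧ (GammaXR Γ E z r).ncard ≤ M)
    (μ : Measure (ℕ → Fin κ)) [IsProbabilityMeasure μ] (hμΓc : μ Γᶜ = 0)
    {C : ℕ}
    (hC : ∀ r : ℝ, 0 < r → 2*r < diam (E ([] : List (Fin κ))) →
      ∀ w ∈ GammaR Γ E r,
      {v ∈ GammaR Γ E r | ∃ p ∈ E v, ∃ q ∈ E w, dist p q < r}.ncard ≤ C)
    {r ε : ℝ} (hr : 0 < r) (hε : 0 < ε)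
    (hr2 : 2*r < diam (E ([] : List (Fin κ)))) :
    μ (badSet Γ E π μ (max M 1) r ε) ≤ (C : ENNReal) * ENNReal.ofReal (r ^ ε) := by
  classical
  set M' := max M 1 with hM'def
  have hrs : r < diam (E ([] : List (Fin κ))) := by linarith
  set G := (gammaR_finite hΓc hM1 hbdd hM2 hr).toFinset with hG
  have hGmem : ∀ {v}, v ∈ G ↔ v ∈ GammaR Γ E r := fun {v} =>
    (gammaR_finite hΓc hM1 hbdd hM2 hr).mem_toFinset
  -- the bad set is covered by its traces on the cylinders of `Γ(r)`
  have hcov : badSet Γ E π μ M' r ε ⊆ ⋃ v ∈ G, (cylSet v ∩ badSet Γ E π μ M' r ε) := by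
    intro x hx
    obtain ⟨n, -, -, -, hmem⟩ := exists_scale hM2 hx.1 hr hrs
    exact mem_biUnion (hGmem.mpr hmem) ⟨mem_cylSet_pre x n, hx⟩
  -- pointwise estimate on each cylinder
  have hcyl : ∀ v ∈ G, μ (cylSet v ∩ badSet Γ E π μ M' r ε) ≤
      ENNReal.ofReal (r ^ ε) *
        ∑ w ∈ G.filter (fun w => ∃ p ∈ E w, ∃ q ∈ E v, dist p q < r), μ (cylSet w) := by
    intro v hvG
    rcases Set.eq_empty_or_nonempty (cylSet v ∩ badSet Γ E π μ M' r ε) with hemp | ⟨x, hxv, hxbad⟩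
    · rw [hemp]; simp
    · obtain ⟨hxΓ, n, hnG, hnlt⟩ := hxbad
      -- the scale-r prefix of x is v itself
      have hveq : pre x n = v := by
        by_contra hne
        have hdisj := gammaR_pairwise_disjoint hM1 hbdd hnG (hGmem.mp hvG) hne
        exact (Set.disjoint_left.mp hdisj (mem_cylSet_pre x n)) hxv
      rw [hveq] at hnG hnlt
      -- cover the ball by the words of `Γ(π x, r)`
      obtain ⟨hfin, hcard⟩ := hM (π x) ⟨x, hxΓ, rfl⟩ r hr
      set S := hfin.toFinset with hS
      have hball : μ.map π (ball (π x) r) ≤ ∑ w ∈ S, μ (cylSet w) :=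
        measure_ball_le_sum hπmeas hM2 hπ hμΓc hr hrs hfin
      -- pick the word of maximal measure
      have hSne : S.Nonempty := by
        by_contra hSe
        rw [Finset.not_nonempty_iff_eq_empty] at hSe
        rw [hSe] at hball
        simp at hball
        rw [hball] at hnlt
        exact (not_lt_of_ge zero_le) hnlt
      obtain ⟨w₀, hw₀S, hw₀sup⟩ := Finset.exists_mem_eq_sup (α := ENNReal) S hSne (fun w => μ (cylSet w))
      have hsum_le : ∑ w ∈ S, μ (cylSet w) ≤ (M' : ENNReal) * μ (cylSet w₀) := by
        calc ∑ w ∈ S, μ (cylSet w) ≤ S.card • μ (cylSet w₀) := by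
              refine Finset.sum_le_card_nsmul S _ _ (fun w hw => ?_)
              rw [← hw₀sup]
              exact Finset.le_sup (f := fun w => μ (cylSet w)) hw
          _ = (S.card : ENNReal) * μ (cylSet w₀) := by rw [nsmul_eq_mul]
          _ ≤ (M' : ENNReal) * μ (cylSet w₀) := by
              apply mul_le_mul_left
              have : S.card = (GammaXR Γ E (π x) r).ncard :=
                (Set.ncard_eq_toFinset_card _ hfin).symm
              rw [this]
              exact_mod_cast le_trans hcard (le_max_left M 1)
      -- cancel M' and transfer the `r^(-ε)`
      have hM'pos : (0:ℝ) < (M' : ℝ) := by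
        have : 1 ≤ M' := le_max_right M 1
        exact_mod_cast lt_of_lt_of_le one_pos (by exact_mod_cast this)
      have hlt2 : (M' : ENNReal) * (ENNReal.ofReal (r ^ (-ε)) * μ (cylSet v)) <
          (M' : ENNReal) * μ (cylSet w₀) := by
        rw [← mul_assoc]
        exact lt_of_lt_of_le hnlt (le_trans hball hsum_le)
      have hM'ne : (M' : ENNReal) ≠ 0 := by
        simp only [ne_eq, Nat.cast_eq_zero]
        omega
      have hM'nt : (M' : ENNReal) ≠ ⊤ := ENNReal.natCast_ne_top _
      have hlt3 : ENNReal.ofReal (r ^ (-ε)) * μ (cylSet v) < μ (cylSet w₀) :=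
        lt_of_mul_lt_mul_left' (by rwa [ENNReal.mul_lt_mul_iff_right hM'ne hM'nt] at hlt2)
      have hμv : μ (cylSet v) ≤ ENNReal.ofReal (r ^ ε) * μ (cylSet w₀) := by
        have h1 : ENNReal.ofReal (r ^ ε) * (ENNReal.ofReal (r ^ (-ε)) * μ (cylSet v)) ≤
            ENNReal.ofReal (r ^ ε) * μ (cylSet w₀) := mul_le_mul_right (le_of_lt hlt3) _
        rwa [← mul_assoc, ← ENNReal.ofReal_mul (by positivity), ← Real.rpow_add hr,
          add_neg_cancel, Real.rpow_zero, ENNReal.ofReal_one, one_mul] at h1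
      -- `w₀` is related to `v`
      have hw₀X : w₀ ∈ GammaXR Γ E (π x) r := hfin.mem_toFinset.mp hw₀S
      obtain ⟨p, hpE, hpball⟩ := hw₀X.2
      have hrel : ∃ p ∈ E w₀, ∃ q ∈ E v, dist p q < r := by
        refine ⟨p, hpE, π x, ?_, ?_⟩
        · have := hπ x hxΓ n
          rwa [hveq] at this
        · exact mem_ball.mp hpball
      have hw₀G : w₀ ∈ G.filter (fun w => ∃ p ∈ E w, ∃ q ∈ E v, dist p q < r) := by
        rw [Finset.mem_filter]
        exact ⟨hGmem.mpr hw₀X.1, hrel⟩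
      calc μ (cylSet v ∩ badSet Γ E π μ M' r ε) ≤ μ (cylSet v) :=
            measure_mono Set.inter_subset_left
        _ ≤ ENNReal.ofReal (r ^ ε) * μ (cylSet w₀) := hμv
        _ ≤ ENNReal.ofReal (r ^ ε) *
              ∑ w ∈ G.filter (fun w => ∃ p ∈ E w, ∃ q ∈ E v, dist p q < r), μ (cylSet w) := by
            apply mul_le_mul_right
            exact Finset.single_le_sum (f := fun w => μ (cylSet w)) (fun w _ => zero_le) hw₀G
  -- sum up
  calc μ (badSet Γ E π μ M' r ε)
      ≤ ∑ v ∈ G, μ (cylSet v ∩ badSet Γ E π μ M' r ε) :=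
        le_trans (measure_mono hcov) (measure_biUnion_finset_le _ _)
    _ ≤ ∑ v ∈ G, ENNReal.ofReal (r ^ ε) *
          ∑ w ∈ G.filter (fun w => ∃ p ∈ E w, ∃ q ∈ E v, dist p q < r), μ (cylSet w) :=
        Finset.sum_le_sum hcyl
    _ = ENNReal.ofReal (r ^ ε) * ∑ v ∈ G,
          ∑ w ∈ G.filter (fun w => ∃ p ∈ E w, ∃ q ∈ E v, dist p q < r), μ (cylSet w) := by
        rw [Finset.mul_sum]
    _ ≤ ENNReal.ofReal (r ^ ε) * ((C : ENNReal) * 1) := by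
        apply mul_le_mul_right
        -- double counting
        have hswap : ∑ v ∈ G, ∑ w ∈ G.filter (fun w => ∃ p ∈ E w, ∃ q ∈ E v, dist p q < r),
            μ (cylSet w) =
            ∑ w ∈ G, ((G.filter (fun v => ∃ p ∈ E w, ∃ q ∈ E v, dist p q < r)).card : ENNReal)
              * μ (cylSet w) := by
          calc ∑ v ∈ G, ∑ w ∈ G.filter (fun w => ∃ p ∈ E w, ∃ q ∈ E v, dist p q < r),
                μ (cylSet w)
              = ∑ v ∈ G, ∑ w ∈ G, if ∃ p ∈ E w, ∃ q ∈ E v, dist p q < r then μ (cylSet w)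
                  else 0 := by
                refine Finset.sum_congr rfl (fun v _ => ?_)
                rw [Finset.sum_filter]
            _ = ∑ w ∈ G, ∑ v ∈ G, if ∃ p ∈ E w, ∃ q ∈ E v, dist p q < r then μ (cylSet w)
                  else 0 := Finset.sum_comm
            _ = ∑ w ∈ G, ((G.filter (fun v => ∃ p ∈ E w, ∃ q ∈ E v, dist p q < r)).card : ENNReal)
                  * μ (cylSet w) := by
                refine Finset.sum_congr rfl (fun w _ => ?_)
                rw [← Finset.sum_filter, Finset.sum_const, nsmul_eq_mul]
        rw [hswap]
        have hbound : ∀ w ∈ G,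
            ((G.filter (fun v => ∃ p ∈ E w, ∃ q ∈ E v, dist p q < r)).card : ENNReal)
              * μ (cylSet w) ≤ (C : ENNReal) * μ (cylSet w) := by
          intro w hwG
          apply mul_le_mul_left
          have hsub : ↑(G.filter (fun v => ∃ p ∈ E w, ∃ q ∈ E v, dist p q < r)) ⊆
              {v ∈ GammaR Γ E r | ∃ p ∈ E v, ∃ q ∈ E w, dist p q < r} := by
            intro v hv
            simp only [Finset.coe_filter, mem_setOf_eq] at hv
            obtain ⟨hvG', p, hp, q, hq, hpq⟩ := hv
            exact ⟨hGmem.mp hvG', q, hq, p, hp, by rwa [dist_comm]⟩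
          have h1 : (G.filter (fun v => ∃ p ∈ E w, ∃ q ∈ E v, dist p q < r)).card ≤
              {v ∈ GammaR Γ E r | ∃ p ∈ E v, ∃ q ∈ E w, dist p q < r}.ncard := by
            rw [← Set.ncard_coe_finset]
            exact Set.ncard_le_ncard hsub
              ((gammaR_finite hΓc hM1 hbdd hM2 hr).subset (sep_subset _ _))
          exact_mod_cast le_trans h1 (hC r hr hr2 w (hGmem.mp hwG))
        calc ∑ w ∈ G, ((G.filter (fun v => ∃ p ∈ E w, ∃ q ∈ E v, dist p q < r)).card : ENNReal)
              * μ (cylSet w) ≤ ∑ w ∈ G, (C : ENNReal) * μ (cylSet w) :=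
              Finset.sum_le_sum hbound
          _ = (C : ENNReal) * ∑ w ∈ G, μ (cylSet w) := by rw [Finset.mul_sum]
          _ ≤ (C : ENNReal) * 1 := by
              apply mul_le_mul_right
              exact sum_gammaR_le_one hM1 hbdd (fun v hv => hGmem.mp hv)
    _ = (C : ENNReal) * ENNReal.ofReal (r ^ ε) := by ring

end Bad
section BC
open Metric Filter Set MeasureTheory
variable {X : Type*} [MetricSpace X] [MeasurableSpace X] [BorelSpace X]
  {κ : ℕ} {Γ : Set (ℕ → Fin κ)} {E : List (Fin κ) → Set X} {π : (ℕ → Fin κ) → X}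

lemma ae_eventually_good (hΓc : IsCompact Γ) (hΓs : shiftMap '' Γ ⊆ Γ)
    (hne : Γ.Nonempty)
    (hbdd : ∀ w, isPrefixWord Γ w → Bornology.IsBounded (E w))
    (hpos : ∀ w, isPrefixWord Γ w → 0 < diam (E w))
    (hM1 : ∀ w, isPrefixWord Γ w → w ≠ [] → E w ⊆ E w.dropLast)
    (hM2 : ∀ x ∈ Γ, Tendsto (fun n => diam (E (pre x n))) atTop (nhds 0))
    {D : ℝ} (hD : 1 ≤ D)
    (hM3 : ∀ v w : List (Fin κ), isPrefixWord Γ (v ++ w) →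
      diam (E (v ++ w)) ≤ D * diam (E v) * diam (E w))
    (hπmeas : Measurable π)
    (hπ : ∀ x ∈ Γ, ∀ n : ℕ, π x ∈ E (pre x n))
    {M : ℕ}
    (hM : ∀ z ∈ π '' Γ, ∀ r : ℝ, 0 < r →
      (GammaXR Γ E z r).Finite ∧ (GammaXR Γ E z r).ncard ≤ M)
    (μ : Measure (ℕ → Fin κ)) [IsProbabilityMeasure μ] (hμΓc : μ Γᶜ = 0) :
    ∀ᵐ x ∂μ, ∀ m : ℕ, ∀ᶠ k : ℕ in atTop,
      x ∉ badSet Γ E π μ (max M 1) ((1/2:ℝ)^k) (1/(m+1:ℝ)) := by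
  obtain ⟨C, hC⟩ := counting_lemma hΓc hΓs hbdd hM1 hM2 hD hM3 hπ hM
  have hd0 : 0 < diam (E ([] : List (Fin κ))) := by
    obtain ⟨x, hx⟩ := hne
    have := hpos [] ⟨x, hx, by simp⟩
    exact this
  have hhalf : Tendsto (fun k : ℕ => ((1/2:ℝ))^k) atTop (nhds 0) := by
    apply tendsto_pow_atTop_nhds_zero_of_lt_one <;> norm_num
  obtain ⟨k₀, hk₀⟩ := (hhalf.eventually (gt_mem_nhds (by linarith : (0:ℝ) < diam (E ([] : List (Fin κ))) / 2))).exists_forall_of_atTop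
  have hsmall : ∀ k, k₀ ≤ k → 2 * ((1/2:ℝ))^k < diam (E ([] : List (Fin κ))) := by
    intro k hk
    have := hk₀ k hk
    linarith
  rw [ae_all_iff]
  intro m
  set ε := (1:ℝ)/(m+1) with hεdef
  have hε : 0 < ε := by positivity
  -- Borel–Cantelli for the shifted sequence of bad sets
  have hBC : ∀ᵐ x ∂μ, ∀ᶠ k : ℕ in atTop,
      x ∉ badSet Γ E π μ (max M 1) ((1/2:ℝ)^(k + k₀)) ε := by
    apply ae_eventually_notMem
    set q := ENNReal.ofReal ((1/2:ℝ) ^ ε) with hq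
    have hq1 : q < 1 := by
      rw [hq, ← ENNReal.ofReal_one]
      apply ENNReal.ofReal_lt_ofReal_iff_of_nonneg (by positivity) |>.mpr
      apply Real.rpow_lt_one (by norm_num) (by norm_num) hε
    have hterm : ∀ k : ℕ, μ (badSet Γ E π μ (max M 1) ((1/2:ℝ)^(k + k₀)) ε) ≤
        (C : ENNReal) * q ^ (k + k₀) := by
      intro k
      have hrk : (0:ℝ) < ((1/2:ℝ))^(k + k₀) := by positivity
      have h1 := bad_measure_le hΓc hΓs hbdd hM1 hM2 hD hM3 hπmeas hπ hM μ hμΓc hC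
        hrk hε (hsmall _ (Nat.le_add_left _ _))
      refine le_trans h1 ?_
      apply mul_le_mul_right
      -- `((1/2)^(k+k₀)) ^ ε = ((1/2)^ε)^(k+k₀)`
      have h2 : ((1/2:ℝ) ^ (k + k₀) : ℝ) ^ ε = ((1/2:ℝ) ^ ε) ^ (k + k₀) := by
        rw [← Real.rpow_natCast (1/2:ℝ) (k + k₀), ← Real.rpow_mul (by norm_num),
          mul_comm, Real.rpow_mul (by norm_num), Real.rpow_natCast]
      rw [h2, ENNReal.ofReal_pow (by positivity)]
    have hgeom : ∑' k : ℕ, (C : ENNReal) * q ^ (k + k₀) ≠ ⊤ := by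
      have hle : ∀ k : ℕ, (C : ENNReal) * q ^ (k + k₀) ≤ (C : ENNReal) * q ^ k := by
        intro k
        apply mul_le_mul_right
        rw [pow_add]
        calc q ^ k * q ^ k₀ ≤ q ^ k * 1 := mul_le_mul_right (pow_le_one' (le_of_lt hq1) _) _
          _ = q ^ k := mul_one _
      have h3 : ∑' k : ℕ, (C : ENNReal) * q ^ (k + k₀) ≤ (C : ENNReal) * (1 - q)⁻¹ := by
        calc ∑' k : ℕ, (C : ENNReal) * q ^ (k + k₀) ≤ ∑' k : ℕ, (C : ENNReal) * q ^ k :=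
            ENNReal.tsum_le_tsum hle
          _ = (C : ENNReal) * ∑' k : ℕ, q ^ k := ENNReal.tsum_mul_left
          _ = (C : ENNReal) * (1 - q)⁻¹ := by rw [ENNReal.tsum_geometric]
      refine ne_top_of_le_ne_top ?_ h3
      apply ENNReal.mul_ne_top (ENNReal.natCast_ne_top C)
      rw [ENNReal.inv_ne_top]
      intro h0
      rw [tsub_eq_zero_iff_le] at h0
      exact absurd hq1 (not_lt_of_ge h0)
    exact ne_top_of_le_ne_top hgeom (ENNReal.tsum_le_tsum hterm)
  filter_upwards [hBC] with x hx
  obtain ⟨K, hK⟩ := hx.exists_forall_of_atTop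
  rw [eventually_atTop]
  refine ⟨K + k₀, fun j hj => ?_⟩
  have := hK (j - k₀) (by omega)
  have hj' : j - k₀ + k₀ = j := by omega
  rwa [hj'] at this

end BC
section Transfer
open Set

lemma sSup_eq_sSup_of_transfer {S T : Set ℝ} (hS : S.Nonempty) (hT : T.Nonempty)
    (hST : ∀ c ∈ S, ∀ c' < c, c' ∈ T) (hTS : ∀ c ∈ T, ∀ c' < c, c' ∈ S) :
    sSup S = sSup T := by
  have key : ∀ (A B : Set ℝ), A.Nonempty → (∀ c ∈ A, ∀ c' < c, c' ∈ B) → BddAbove B →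
      ∀ c ∈ A, c ≤ sSup B := by
    intro A B hA hAB hbB c hc
    by_contra hlt
    push_neg at hlt
    obtain ⟨c', hc'1, hc'2⟩ := exists_between hlt
    exact absurd (le_csSup hbB (hAB c hc c' hc'2)) (not_le_of_gt hc'1)
  by_cases hbS : BddAbove S
  · have hbT : BddAbove T := by
      by_contra hbT
      -- if T is unbounded then so is S
      apply hbT
      obtain ⟨b, hb⟩ := hbS
      refine ⟨b + 1, fun c hc => ?_⟩
      by_contra hlt
      push_neg at hlt
      have : b + 1 ∈ S := hTS c hc (b+1) hlt
      have := hb this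
      linarith
    apply le_antisymm
    · exact csSup_le hS (fun c hc => key S T hS hST hbT c hc)
    · exact csSup_le hT (fun c hc => key T S hT hTS hbS c hc)
  · have hbT : ¬ BddAbove T := by
      intro hbT
      apply hbS
      obtain ⟨b, hb⟩ := hbT
      refine ⟨b + 1, fun c hc => ?_⟩
      by_contra hlt
      push_neg at hlt
      have : b + 1 ∈ T := hST c hc (b+1) hlt
      have := hb this
      linarith
    rw [Real.sSup_of_not_bddAbove hbS, Real.sSup_of_not_bddAbove hbT]

end Transfer

/-- under (M3) and the uniform finite clustering property, the
lower local dimension of the projected measure `πμ` at `π(i)` equals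
`liminf_n log μ([i|n]) / log diam(E_{i|n})`, for `μ`-almost every `i ∈ Γ`. -/
theorem local_dimension_symbolic {X : Type*} [MetricSpace X] [CompleteSpace X]
    [MeasurableSpace X] [BorelSpace X]
    {κ : ℕ} (hκ : 2 ≤ κ) (Γ : Set (ℕ → Fin κ)) (hΓc : IsCompact Γ)
    (hΓs : shiftMap '' Γ ⊆ Γ) (E : List (Fin κ) → Set X)
    (hclosed : ∀ w, isPrefixWord Γ w → IsClosed (E w))
    (hbdd : ∀ w, isPrefixWord Γ w → Bornology.IsBounded (E w))
    (hpos : ∀ w, isPrefixWord Γ w → 0 < diam (E w))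
    (hM1 : ∀ w, isPrefixWord Γ w → w ≠ [] → E w ⊆ E w.dropLast)
    (hM2 : ∀ x ∈ Γ, Tendsto (fun n => diam (E (pre x n))) atTop (nhds 0))
    (D : ℝ) (hD : 1 ≤ D)
    (hM3 : ∀ v w : List (Fin κ), isPrefixWord Γ (v ++ w) →
      diam (E (v ++ w)) ≤ D * diam (E v) * diam (E w))
    (π : (ℕ → Fin κ) → X) (hπmeas : Measurable π)
    (hπ : ∀ x ∈ Γ, ∀ n : ℕ, π x ∈ E (pre x n))
    (hufcp : ∃ M : ℕ, ∀ x ∈ π '' Γ, ∀ r : ℝ, 0 < r →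
      (GammaXR Γ E x r).Finite ∧ (GammaXR Γ E x r).ncard ≤ M)
    (μ : Measure (ℕ → Fin κ)) [IsProbabilityMeasure μ] (hμΓ : μ Γ = 1) :
    ∀ᵐ x ∂μ,
      liminf (fun r : ℝ =>
          Real.log ((μ.map π) (ball (π x) r)).toReal / Real.log r)
        (nhdsWithin 0 (Set.Ioi 0)) =
      liminf (fun n : ℕ =>
          Real.log (μ (cylSet (pre x n))).toReal / Real.log (diam (E (pre x n))))
        atTop := by
  classical
  obtain ⟨M, hM⟩ := hufcp
  set M' := max M 1 with hM'def
  have hne : Γ.Nonempty := by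
    rcases Set.eq_empty_or_nonempty Γ with h | h
    · rw [h] at hμΓ
      simp at hμΓ
    · exact h
  have hΓmeas : MeasurableSet Γ := hΓc.isClosed.measurableSet
  have hμΓc : μ Γᶜ = 0 := by
    rw [measure_compl hΓmeas (measure_ne_top μ Γ), hμΓ, measure_univ, tsub_self]
  have hd0 : 0 < diam (E ([] : List (Fin κ))) :=
    hpos [] ⟨hne.some, hne.some_mem, by simp⟩
  have hνprob : IsProbabilityMeasure (μ.map π) :=
    Measure.isProbabilityMeasure_map hπmeas.aemeasurable
  -- the three a.e. conditions
  have hG1 : ∀ᵐ x ∂μ, x ∈ Γ := by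
    rw [ae_iff]
    have : {x : ℕ → Fin κ | ¬ x ∈ Γ} = Γᶜ := rfl
    rw [this, hμΓc]
  have hG2 : ∀ᵐ x ∂μ, ∀ n : ℕ, μ (cylSet (pre x n)) ≠ 0 := by
    rw [ae_iff]
    have hnull : μ (⋃ w ∈ {w : List (Fin κ) | μ (cylSet w) = 0}, cylSet w) = 0 :=
      (measure_biUnion_null_iff (Set.to_countable _)).mpr (fun w hw => hw)
    refine measure_mono_null ?_ hnull
    intro x hx
    simp only [mem_setOf_eq, not_forall, not_not] at hx
    obtain ⟨n, hn⟩ := hx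
    exact mem_biUnion hn (mem_cylSet_pre x n)
  have hG3 := ae_eventually_good hΓc hΓs hne hbdd hpos hM1 hM2 hD hM3 hπmeas hπ hM μ hμΓc
  filter_upwards [hG1, hG2, hG3] with x hxΓ hxpos hxgood
  -- pointwise notation and facts
  have hdpos : ∀ n : ℕ, 0 < diam (E (pre x n)) := fun n => hpos _ (prefixWord_pre hxΓ n)
  have hdlim : Tendsto (fun n => diam (E (pre x n))) atTop (nhds 0) := hM2 x hxΓ
  have hmrpos : ∀ n : ℕ, 0 < (μ (cylSet (pre x n))).toReal :=
    fun n => ENNReal.toReal_pos (hxpos n) (measure_ne_top μ _)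
  have hmrle : ∀ n : ℕ, (μ (cylSet (pre x n))).toReal ≤ 1 := by
    intro n
    rw [← ENNReal.toReal_one]
    exact ENNReal.toReal_mono ENNReal.one_ne_top prob_le_one
  have hball_ge : ∀ (n : ℕ) (r : ℝ), diam (E (pre x n)) < r →
      μ (cylSet (pre x n)) ≤ μ.map π (ball (π x) r) := by
    intro n r hnr
    rw [Measure.map_apply hπmeas measurableSet_ball]
    calc μ (cylSet (pre x n))
        ≤ μ ((cylSet (pre x n) ∩ Γ) ∪ Γᶜ) := by
          apply measure_mono
          intro y hy
          by_cases hyΓ : y ∈ Γ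
          · exact Or.inl ⟨hy, hyΓ⟩
          · exact Or.inr hyΓ
      _ ≤ μ (cylSet (pre x n) ∩ Γ) + μ Γᶜ := measure_union_le _ _
      _ = μ (cylSet (pre x n) ∩ Γ) := by rw [hμΓc, add_zero]
      _ ≤ μ (π ⁻¹' ball (π x) r) := by
          apply measure_mono
          rintro y ⟨hy1, hy2⟩
          have hpre : pre y n = pre x n := pre_eq_of_mem_cylSet hy1
          have h1 : π y ∈ E (pre x n) := by
            have := hπ y hy2 n
            rwa [hpre] at this
          have h2 : π x ∈ E (pre x n) := hπ x hxΓ n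
          have := dist_le_diam_of_mem (hbdd _ (prefixWord_pre hxΓ n)) h1 h2
          simp only [mem_preimage, mem_ball]
          linarith
  have hνpos : ∀ r : ℝ, 0 < r → 0 < ((μ.map π) (ball (π x) r)).toReal := by
    intro r hr
    obtain ⟨n, hn⟩ := (hdlim.eventually (gt_mem_nhds hr)).exists
    refine ENNReal.toReal_pos (fun h0 => ?_) (measure_ne_top _ _)
    have := hball_ge n r hn
    rw [h0] at this
    exact hxpos n (le_antisymm (by simpa using this) zero_le)
  have hν1 : ∀ r : ℝ, ((μ.map π) (ball (π x) r)).toReal ≤ 1 := by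
    intro r
    rw [← ENNReal.toReal_one]
    exact ENNReal.toReal_mono ENNReal.one_ne_top prob_le_one
  have hf0 : ∀ r : ℝ, 0 < r → r < 1 →
      0 ≤ Real.log ((μ.map π) (ball (π x) r)).toReal / Real.log r := by
    intro r h0 h1
    refine div_nonneg_iff.mpr (Or.inr ⟨?_, ?_⟩)
    · exact Real.log_nonpos (le_of_lt (hνpos r h0)) (hν1 r)
    · exact le_of_lt (Real.log_neg h0 h1)
  have ha0 : ∀ n : ℕ, diam (E (pre x n)) < 1 →
      0 ≤ Real.log (μ (cylSet (pre x n))).toReal / Real.log (diam (E (pre x n))) := by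
    intro n hn
    refine div_nonneg_iff.mpr (Or.inr ⟨?_, ?_⟩)
    · exact Real.log_nonpos (le_of_lt (hmrpos n)) (hmrle n)
    · exact le_of_lt (Real.log_neg (hdpos n) hn)
  rw [liminf_eq, liminf_eq]
  apply sSup_eq_sSup_of_transfer
  -- S nonempty
  · refine ⟨-1, ?_⟩
    have hIoo : Ioo (0:ℝ) 1 ∈ nhdsWithin (0:ℝ) (Set.Ioi 0) :=
      Ioo_mem_nhdsGT_of_mem ⟨le_refl 0, one_pos⟩
    filter_upwards [hIoo] with r hr
    linarith [hf0 r hr.1 hr.2]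
  -- T nonempty
  · refine ⟨-1, ?_⟩
    filter_upwards [hdlim.eventually (gt_mem_nhds one_pos)] with n hn
    linarith [ha0 n hn]
  -- easy direction : from balls to cylinders
  · intro c hc c' hc'
    simp only [mem_setOf_eq] at hc ⊢
    by_cases hc0 : c' ≤ 0
    · filter_upwards [hdlim.eventually (gt_mem_nhds one_pos)] with n hn
      linarith [ha0 n hn]
    push_neg at hc0
    have hcpos : 0 < c := lt_trans hc0 hc'
    obtain ⟨δ, hδ0, hδ⟩ : ∃ δ, 0 < δ ∧ ∀ r ∈ Ioo (0:ℝ) δ,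
        c ≤ Real.log ((μ.map π) (ball (π x) r)).toReal / Real.log r := by
      rw [(nhdsGT_basis (0:ℝ)).eventually_iff] at hc
      exact hc
    set θ := Real.exp (-(c * Real.log 2)/(c - c')) with hθdef
    have hθpos : 0 < θ := Real.exp_pos _
    have hsmall : ∀ᶠ n in atTop, diam (E (pre x n)) < min (δ/2) (min (1/2) θ) :=
      hdlim.eventually (gt_mem_nhds (by positivity))
    filter_upwards [hsmall] with n hn
    have hd1 : diam (E (pre x n)) < δ/2 := lt_of_lt_of_le hn (min_le_left _ _)
    have hd2 : diam (E (pre x n)) < 1/2 :=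
      lt_of_lt_of_le hn (le_trans (min_le_right _ _) (min_le_left _ _))
    have hd3 : diam (E (pre x n)) < θ :=
      lt_of_lt_of_le hn (le_trans (min_le_right _ _) (min_le_right _ _))
    have hdnpos : 0 < diam (E (pre x n)) := hdpos n
    have hf : c ≤ Real.log ((μ.map π) (ball (π x) (2 * diam (E (pre x n))))).toReal /
        Real.log (2 * diam (E (pre x n))) :=
      hδ (2 * diam (E (pre x n))) ⟨by positivity, by linarith⟩
    have hlogrn : Real.log (2 * diam (E (pre x n))) < 0 :=
      Real.log_neg (by positivity) (by linarith)
    have hlogd : Real.log (diam (E (pre x n))) < 0 := Real.log_neg hdnpos (by linarith)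
    have hA : Real.log ((μ.map π) (ball (π x) (2 * diam (E (pre x n))))).toReal ≤
        c * Real.log (2 * diam (E (pre x n))) := (le_div_iff_of_neg hlogrn).mp hf
    have hmA : (μ (cylSet (pre x n))).toReal ≤
        ((μ.map π) (ball (π x) (2 * diam (E (pre x n))))).toReal :=
      ENNReal.toReal_mono (measure_ne_top _ _) (hball_ge n _ (by linarith))
    have hlogm : Real.log (μ (cylSet (pre x n))).toReal ≤
        c * Real.log (2 * diam (E (pre x n))) :=
      le_trans (Real.log_le_log (hmrpos n) hmA) hA
    rw [le_div_iff_of_neg hlogd]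
    have hsplit : Real.log (2 * diam (E (pre x n))) =
        Real.log 2 + Real.log (diam (E (pre x n))) :=
      Real.log_mul two_ne_zero (ne_of_gt hdnpos)
    have hlogθ : Real.log (diam (E (pre x n))) < -(c * Real.log 2)/(c - c') := by
      have := Real.log_lt_log hdnpos hd3
      rwa [hθdef, Real.log_exp] at this
    have hcc' : 0 < c - c' := by linarith
    have hmul : Real.log (diam (E (pre x n))) * (c - c') < -(c * Real.log 2) :=
      (lt_div_iff₀ hcc').mp hlogθ
    rw [hsplit] at hlogm
    nlinarith [hlogm, hmul]
  -- hard direction : from cylinders to balls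
  · intro c hc c' hc'
    simp only [mem_setOf_eq] at hc ⊢
    by_cases hc'0 : c' ≤ 0
    · have hIoo : Ioo (0:ℝ) 1 ∈ nhdsWithin (0:ℝ) (Set.Ioi 0) :=
        Ioo_mem_nhdsGT_of_mem ⟨le_refl 0, one_pos⟩
      filter_upwards [hIoo] with r hr
      linarith [hf0 r hr.1 hr.2]
    push_neg at hc'0
    have hcpos : 0 < c := lt_trans hc'0 hc'
    obtain ⟨m, hm⟩ := exists_nat_one_div_lt (show (0:ℝ) < c - c' by linarith)
    set ε := 1/((m:ℝ)+1) with hεdef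
    have hε : 0 < ε := by positivity
    have hεlt : ε < c - c' := hm
    obtain ⟨N₄, hN₄⟩ := (eventually_atTop).mp hc
    obtain ⟨K₁, hK₁⟩ := (eventually_atTop).mp (hxgood m)
    have hδ4ex : ∀ N : ℕ, ∃ δ4 : ℝ, 0 < δ4 ∧ ∀ j ≤ N, δ4 ≤ diam (E (pre x j)) := by
      intro N
      induction N with
      | zero =>
        exact ⟨diam (E (pre x 0)), hdpos 0, fun j hj => by rw [Nat.le_zero.mp hj]⟩
      | succ N ih =>
        obtain ⟨δ4, h0, hle⟩ := ih
        refine ⟨min δ4 (diam (E (pre x (N+1)))), lt_min h0 (hdpos _), fun j hj => ?_⟩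
        rcases Nat.lt_succ_iff_lt_or_eq.mp (Nat.lt_succ_of_le hj) with h | h
        · exact le_trans (min_le_left _ _) (hle j (by omega))
        · rw [h]
          exact min_le_right _ _
    obtain ⟨δ4, hδ40, hδ4le⟩ := hδ4ex N₄
    have hhalf : Tendsto (fun k : ℕ => ((1/2:ℝ))^k) atTop (nhds 0) := by
      apply tendsto_pow_atTop_nhds_zero_of_lt_one <;> norm_num
    obtain ⟨K₂, hK₂⟩ := eventually_atTop.mp (hhalf.eventually (gt_mem_nhds
      (show 0 < diam (E ([] : List (Fin κ))) / 2 by linarith)))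
    obtain ⟨K₆, hK₆⟩ := eventually_atTop.mp (hhalf.eventually (gt_mem_nhds hδ40))
    set L2 := Real.log 2 with hL2def
    have hL2 : 0 < L2 := Real.log_pos (by norm_num)
    set LM := Real.log (M' : ℝ) with hLMdef
    have hM'1 : (1:ℝ) ≤ (M' : ℝ) := by
      exact_mod_cast (le_max_right M 1 : 1 ≤ M')
    have hM'pos : (0:ℝ) < (M' : ℝ) := lt_of_lt_of_le one_pos hM'1
    have hLM : 0 ≤ LM := Real.log_nonneg hM'1
    obtain ⟨K₃, hK₃⟩ := exists_nat_ge ((LM + c'*L2)/((c - ε - c')*L2))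
    set K := max 1 (max (max K₁ K₂) (max K₃ K₆)) with hKdef
    have hIoo : Ioo (0:ℝ) ((1/2:ℝ)^K) ∈ nhdsWithin (0:ℝ) (Set.Ioi 0) :=
      Ioo_mem_nhdsGT_of_mem ⟨le_refl 0, by positivity⟩
    filter_upwards [hIoo] with r hr
    obtain ⟨hr0, hrK⟩ := hr
    -- dyadic index
    have hexk : ∃ j : ℕ, (1/2:ℝ)^(j+1) < r := by
      obtain ⟨j, hj⟩ := (hhalf.eventually (gt_mem_nhds hr0)).exists
      refine ⟨j, lt_of_le_of_lt ?_ hj⟩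
      apply pow_le_pow_of_le_one (by norm_num) (by norm_num) (by omega)
    set k := Nat.find hexk with hkdef
    have hk1 : (1/2:ℝ)^(k+1) < r := Nat.find_spec hexk
    have hk2 : r ≤ (1/2:ℝ)^k := by
      rcases Nat.eq_zero_or_pos k with h0 | h0
      · rw [h0, pow_zero]
        have h1 : ((1/2:ℝ))^K ≤ 1 := pow_le_one₀ (by norm_num) (by norm_num)
        linarith
      · have hmin := Nat.find_min hexk (m := k-1) (by omega)
        push_neg at hmin
        have hkk : k - 1 + 1 = k := by omega
        rwa [hkk] at hmin
    have hkK : K ≤ k := by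
      by_contra hlt
      push_neg at hlt
      have h1 : ((1/2:ℝ))^K ≤ (1/2)^(k+1) := by
        apply pow_le_pow_of_le_one (by norm_num) (by norm_num) (by omega)
      linarith
    have hK1k : K₁ ≤ k := le_trans (le_trans (le_trans (le_max_left _ _) (le_max_left _ _)) (le_max_right _ _)) hkK
    have hK2k : K₂ ≤ k := le_trans (le_trans (le_trans (le_max_right _ _) (le_max_left _ _)) (le_max_right _ _)) hkK
    have hK3k : K₃ ≤ k := le_trans (le_trans (le_trans (le_max_left _ _) (le_max_right _ _)) (le_max_right _ _)) hkK
    have hK6k : K₆ ≤ k := le_trans (le_trans (le_trans (le_max_right _ _) (le_max_right _ _)) (le_max_right _ _)) hkK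
    have h1k : 1 ≤ k := le_trans (le_max_left _ _) hkK
    have hrkpos : (0:ℝ) < (1/2:ℝ)^k := by positivity
    have hrkhalf : ((1/2:ℝ))^k ≤ 1/2 := by
      calc ((1/2:ℝ))^k ≤ (1/2)^1 := pow_le_pow_of_le_one (by norm_num) (by norm_num) h1k
        _ = 1/2 := pow_one _
    have hrkd0 : ((1/2:ℝ))^k < diam (E ([] : List (Fin κ))) := by
      have := hK₂ k hK2k
      linarith
    obtain ⟨n, hn0, hnle, hnlt, hnG⟩ := exists_scale hM2 hxΓ hrkpos hrkd0
    have hnN : N₄ ≤ n := by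
      by_contra hlt2
      push_neg at hlt2
      have h1 : δ4 ≤ diam (E (pre x n)) := hδ4le n (by omega)
      have h2 : ((1/2:ℝ))^k < δ4 := hK₆ k hK6k
      linarith
    have hca : c ≤ Real.log (μ (cylSet (pre x n))).toReal /
        Real.log (diam (E (pre x n))) := hN₄ n hnN
    have hnb : x ∉ badSet Γ E π μ M' ((1/2:ℝ)^k) ε := hK₁ k hK1k
    have hble : μ.map π (ball (π x) ((1/2:ℝ)^k)) ≤
        (M' : ENNReal) * ENNReal.ofReal (((1/2:ℝ)^k) ^ (-ε)) * μ (cylSet (pre x n)) := by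
      by_contra hgt
      push_neg at hgt
      exact hnb ⟨hxΓ, n, hnG, hgt⟩
    have hRHSne : (M' : ENNReal) * ENNReal.ofReal (((1/2:ℝ)^k) ^ (-ε)) *
        μ (cylSet (pre x n)) ≠ ⊤ :=
      ENNReal.mul_ne_top (ENNReal.mul_ne_top (ENNReal.natCast_ne_top _)
        ENNReal.ofReal_ne_top) (measure_ne_top _ _)
    have hmono : μ.map π (ball (π x) r) ≤ μ.map π (ball (π x) ((1/2:ℝ)^k)) :=
      measure_mono (ball_subset_ball hk2)
    have hAB : ((μ.map π) (ball (π x) r)).toReal ≤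
        (M':ℝ) * ((1/2:ℝ)^k) ^ (-ε) * (μ (cylSet (pre x n))).toReal := by
      have h2 := ENNReal.toReal_mono hRHSne (le_trans hmono hble)
      rwa [ENNReal.toReal_mul, ENNReal.toReal_mul,
        ENNReal.toReal_ofReal (le_of_lt (Real.rpow_pos_of_pos hrkpos _)),
        show ((M' : ENNReal)).toReal = (M' : ℝ) from rfl] at h2
    have hApos : 0 < ((μ.map π) (ball (π x) r)).toReal := hνpos r hr0
    have hrpow : (0:ℝ) < ((1/2:ℝ)^k) ^ (-ε) := Real.rpow_pos_of_pos hrkpos _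
    have hdn1 : diam (E (pre x n)) < 1 := lt_of_le_of_lt hnle (by linarith)
    have hlogdn : Real.log (diam (E (pre x n))) < 0 := Real.log_neg (hdpos n) hdn1
    have hlogA : Real.log ((μ.map π) (ball (π x) r)).toReal ≤
        LM + (-ε) * Real.log ((1/2:ℝ)^k) + c * Real.log ((1/2:ℝ)^k) := by
      have h1 : Real.log ((μ.map π) (ball (π x) r)).toReal ≤
          Real.log ((M':ℝ) * ((1/2:ℝ)^k) ^ (-ε) * (μ (cylSet (pre x n))).toReal) :=
        Real.log_le_log hApos hAB
      rw [Real.log_mul (by positivity) (ne_of_gt (hmrpos n)),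
        Real.log_mul (ne_of_gt hM'pos) (ne_of_gt hrpow), Real.log_rpow hrkpos] at h1
      have h2 : Real.log (μ (cylSet (pre x n))).toReal ≤
          c * Real.log (diam (E (pre x n))) := (le_div_iff_of_neg hlogdn).mp hca
      have h3 : c * Real.log (diam (E (pre x n))) ≤ c * Real.log ((1/2:ℝ)^k) :=
        mul_le_mul_of_nonneg_left (Real.log_le_log (hdpos n) hnle) (le_of_lt hcpos)
      linarith
    have hlogrk : Real.log ((1/2:ℝ)^k) = -((k:ℝ) * L2) := by
      rw [Real.log_pow, one_div, Real.log_inv, hL2def]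
      push_cast
      ring
    have hklin : LM + c'*L2 ≤ (k:ℝ) * ((c - ε - c')*L2) := by
      have hK₃k : (K₃:ℝ) ≤ (k:ℝ) := by exact_mod_cast hK3k
      have hpos2 : 0 < (c - ε - c')*L2 := by
        apply mul_pos _ hL2
        linarith
      have h4 := (div_le_iff₀ hpos2).mp (le_trans hK₃ hK₃k)
      linarith
    have hlogr1 : Real.log r < 0 := Real.log_neg hr0 (by linarith [hk2, hrkhalf])
    have hlogr2 : -(((k:ℝ)+1) * L2) < Real.log r := by
      have h5 := Real.log_lt_log (by positivity : (0:ℝ) < (1/2:ℝ)^(k+1)) hk1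
      rw [Real.log_pow, one_div, Real.log_inv] at h5
      rw [hL2def]
      push_cast at h5 ⊢
      linarith
    rw [le_div_iff_of_neg hlogr1]
    have hc'r : c' * (-(((k:ℝ)+1) * L2)) < c' * Real.log r :=
      mul_lt_mul_of_pos_left hlogr2 hc'0
    rw [hlogrk] at hlogA
    have e1 : LM + (-ε) * (-((k:ℝ) * L2)) + c * (-((k:ℝ) * L2)) =
        LM - ((k:ℝ) * ((c - ε - c')*L2)) - c' * ((k:ℝ) * L2) := by ring
    have e2 : c' * (-(((k:ℝ)+1) * L2)) = -(c' * L2) - c' * ((k:ℝ) * L2) := by ring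
    rw [e1] at hlogA
    rw [e2] at hc'r
    linarith
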